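/- arXiv:math-ph/0202037 — 4 statements merged into one kernel-verified Lean document; each statement's English description precedes it below -/
import Mathlib

section
/- The linear Toda bracket π₁ and the quadratic Toda bracket π₂ on ℝ^{2n} are compatible: their sum π₁ + π₂ also satisfies the Jacobi identity. -/
/-- Kronecker delta as a real number. -/
def kron (p : Prop) [Decidable p] : ℝ := if p then 1 else 0
/-- The Poisson bracket of two functions determined by a bivector `P` (this is the
extension of the coordinate brackets by bilinearity, antisymmetry and the Leibniz rule):
`{F,G}(x) = ∑ i j, P x i j * ∂F/∂xᵢ * ∂G/∂xⱼ`. -/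
noncomputable def pb {k : Type} [Fintype k] [DecidableEq k]
    (P : (k → ℝ) → k → k → ℝ) (F G : (k → ℝ) → ℝ) : (k → ℝ) → ℝ :=
  fun x => ∑ i, ∑ j, P x i j * fderiv ℝ F x (Pi.single i 1) * fderiv ℝ G x (Pi.single j 1)
/-- The linear Toda bivector: coordinates `a₁,…,a_m` (indices `Sum.inl`) and
`b₁,…,b_n` (indices `Sum.inr`), with `{aᵢ,bⱼ} = aᵢ(δᵢⱼ − δ_{i+1,j})`,
`{aᵢ,aⱼ} = {bᵢ,bⱼ} = 0` (indices are 0-based in Lean, 1-based in the literature). -/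
noncomputable def todaLin (m n : ℕ) (x : Fin m ⊕ Fin n → ℝ) :
    Fin m ⊕ Fin n → Fin m ⊕ Fin n → ℝ := fun u v =>
  match u, v with
  | Sum.inl i, Sum.inr j => x (Sum.inl i) * (kron ((i : ℕ) = (j : ℕ)) - kron ((i : ℕ) + 1 = (j : ℕ)))
  | Sum.inr j, Sum.inl i => -(x (Sum.inl i) * (kron ((i : ℕ) = (j : ℕ)) - kron ((i : ℕ) + 1 = (j : ℕ))))
  | _, _ => 0
/-- The quadratic Toda bivector: `{aᵢ,aⱼ} = aᵢaⱼ(δ_{i,j+1} − δ_{i+1,j})`,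
`{aᵢ,bⱼ} = aᵢbⱼ(δᵢⱼ − δ_{i+1,j})`, `{bᵢ,b_{i+1}} = -aᵢ` (the antisymmetric extension of
`{bᵢ,bⱼ} = aᵢ(δ_{i,j+1} − δ_{i+1,j})`). Indices 0-based in Lean, 1-based in the literature. -/
noncomputable def todaQuad (m n : ℕ) (x : Fin m ⊕ Fin n → ℝ) :
    Fin m ⊕ Fin n → Fin m ⊕ Fin n → ℝ := fun u v =>
  match u, v with
  | Sum.inl i, Sum.inl j =>
      x (Sum.inl i) * x (Sum.inl j) * (kron ((i : ℕ) = (j : ℕ) + 1) - kron ((i : ℕ) + 1 = (j : ℕ)))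
  | Sum.inl i, Sum.inr j =>
      x (Sum.inl i) * x (Sum.inr j) * (kron ((i : ℕ) = (j : ℕ)) - kron ((i : ℕ) + 1 = (j : ℕ)))
  | Sum.inr j, Sum.inl i =>
      -(x (Sum.inl i) * x (Sum.inr j) * (kron ((i : ℕ) = (j : ℕ)) - kron ((i : ℕ) + 1 = (j : ℕ))))
  | Sum.inr i, Sum.inr j =>
      (if h : (j : ℕ) + 1 = (i : ℕ) ∧ (j : ℕ) < m then x (Sum.inl ⟨(j : ℕ), h.2⟩) else 0)
      - (if h : (i : ℕ) + 1 = (j : ℕ) ∧ (i : ℕ) < m then x (Sum.inl ⟨(i : ℕ), h.2⟩) else 0)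

/-!
Adding `π₁` amounts to translating the `b`-coordinates by `1`: `π₂` is affine in `b` with linear
part `π₁`, so `π₁ + π₂` at `x` is `π₂` at `x + (0, 1)`, and it suffices that `π₂` is Poisson.
For a bivector `P`, the second-derivative terms in the Jacobiator of `{F, G} = ∑ Pᵢⱼ ∂ᵢF ∂ⱼG`
cancel by the symmetry of Hessians, leaving `∑ Jᵢⱼₗ ∂ᵢF ∂ⱼG ∂ₗH` where `Jᵢⱼₗ` is the Jacobiator of
the coordinate functions. For `π₂` the `Jᵢⱼₗ` are polynomials whose coefficients depend only on
which of the indices `i, j, l` coincide or are adjacent, which leaves finitely many cases.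
-/

lemma map_eq_sum_pi_single {ι R M F : Type*} [Fintype ι] [DecidableEq ι] [CommSemiring R]
    [AddCommMonoid M] [Module R M] [FunLike F (ι → R) M] [LinearMapClass F R (ι → R) M]
    (L : F) (v : ι → R) : L v = ∑ i, v i • L (Pi.single i 1) := by
  conv_lhs => rw [pi_eq_sum_univ' v]
  simp only [map_sum, map_smul]

lemma hasFDerivAt_fderiv_apply {E F : Type*} [NormedAddCommGroup E] [NormedSpace ℝ E]
    [NormedAddCommGroup F] [NormedSpace ℝ F] {f : E → F} {x : E} (hf : ContDiffAt ℝ 2 f x)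
    (v : E) : HasFDerivAt (fun y => fderiv ℝ f y v) ((fderiv ℝ (fderiv ℝ f) x).flip v) x := by
  have hf' : DifferentiableAt ℝ (fderiv ℝ f) x :=
    (hf.fderiv_right (m := 1) (by norm_num)).differentiableAt one_ne_zero
  simpa using hf'.hasFDerivAt.clm_apply (hasFDerivAt_const v x)

lemma sum_sum_sum_cycle {ι M : Type*} [AddCommMonoid M] (s : Finset ι) (f : ι → ι → ι → M) :
    ∑ i ∈ s, ∑ j ∈ s, ∑ l ∈ s, f l i j = ∑ i ∈ s, ∑ j ∈ s, ∑ l ∈ s, f i j l :=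
  (Finset.sum_congr rfl fun _ _ => Finset.sum_comm).trans Finset.sum_comm

section PoissonBracket

variable {k : Type} [Fintype k] [DecidableEq k]

noncomputable def hamiltonianVector (P : (k → ℝ) → k → k → ℝ) (H : (k → ℝ) → ℝ) (x : k → ℝ) :
    k → ℝ :=
  fun m => ∑ l, P x m l * fderiv ℝ H x (Pi.single l 1)

/-- `{{xᵢ, xⱼ}, xₗ}` for the coordinate functions `xᵢ`. -/
noncomputable def coordDoubleBracket (P : (k → ℝ) → k → k → ℝ) (x : k → ℝ) (i j l : k) : ℝ :=
  fderiv ℝ (fun y => P y i j) x (fun m => P x m l)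

noncomputable def coordJacobiator (P : (k → ℝ) → k → k → ℝ) (x : k → ℝ) (i j l : k) : ℝ :=
  coordDoubleBracket P x i j l + coordDoubleBracket P x j l i + coordDoubleBracket P x l i j

variable {P : (k → ℝ) → k → k → ℝ} {x : k → ℝ}

omit [DecidableEq k] in
lemma coordJacobiator_comp_add_right (c : k → ℝ) (i j l : k) :
    coordJacobiator (fun y => P (y + c)) x i j l = coordJacobiator P (x + c) i j l := by
  have h (a b : k) : fderiv ℝ (fun y => P (y + c) a b) x = fderiv ℝ (fun y => P y a b) (x + c) :=
    fderiv_comp_add_right (f := fun y => P y a b) c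
  simp only [coordJacobiator, coordDoubleBracket, h]

lemma pb_apply_eq_fderiv (F H : (k → ℝ) → ℝ) :
    pb P F H x = fderiv ℝ F x (hamiltonianVector P H x) := by
  rw [map_eq_sum_pi_single]
  simp only [pb, hamiltonianVector, smul_eq_mul, Finset.sum_mul]
  exact Finset.sum_congr rfl fun i _ => Finset.sum_congr rfl fun j _ => by ring

lemma fderiv_apply_hamiltonianVector (f H : (k → ℝ) → ℝ) :
    fderiv ℝ f x (hamiltonianVector P H x)
      = ∑ l, fderiv ℝ H x (Pi.single l 1) * fderiv ℝ f x (fun m => P x m l) := by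
  have : hamiltonianVector P H x = ∑ l, fderiv ℝ H x (Pi.single l 1) • fun m => P x m l := by
    funext m
    simp only [hamiltonianVector, Finset.sum_apply, Pi.smul_apply, smul_eq_mul, mul_comm]
  simp only [this, map_sum, map_smul, smul_eq_mul]

lemma fderiv_pb_apply (hP : ∀ i j, DifferentiableAt ℝ (fun y => P y i j) x)
    (hanti : ∀ i j, P x j i = -P x i j) {F G : (k → ℝ) → ℝ}
    (hF : ContDiffAt ℝ 2 F x) (hG : ContDiffAt ℝ 2 G x) (w : k → ℝ) :
    fderiv ℝ (pb P F G) x w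
      = ∑ i, ∑ j, fderiv ℝ (fun y => P y i j) x w * fderiv ℝ F x (Pi.single i 1)
          * fderiv ℝ G x (Pi.single j 1)
        + fderiv ℝ (fderiv ℝ F) x w (hamiltonianVector P G x)
        - fderiv ℝ (fderiv ℝ G) x w (hamiltonianVector P F x) := by
  have hpb : HasFDerivAt (pb P F G) (∑ i, ∑ j,
      ((P x i j * fderiv ℝ F x (Pi.single i 1)) • (fderiv ℝ (fderiv ℝ G) x).flip (Pi.single j 1)
        + fderiv ℝ G x (Pi.single j 1) • (P x i j • (fderiv ℝ (fderiv ℝ F) x).flip (Pi.single i 1)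
          + fderiv ℝ F x (Pi.single i 1) • fderiv ℝ (fun y => P y i j) x))) x :=
    HasFDerivAt.fun_sum fun i _ => HasFDerivAt.fun_sum fun j _ =>
      ((hP i j).hasFDerivAt.mul (hasFDerivAt_fderiv_apply hF _)).mul
        (hasFDerivAt_fderiv_apply hG _)
  rw [hpb.fderiv, map_eq_sum_pi_single (fderiv ℝ (fderiv ℝ F) x w),
    map_eq_sum_pi_single (fderiv ℝ (fderiv ℝ G) x w)]
  have hswap : ∑ j, ∑ i, P x j i * fderiv ℝ F x (Pi.single i 1)
        * fderiv ℝ (fderiv ℝ G) x w (Pi.single j 1)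
      = -∑ i, ∑ j, P x i j * fderiv ℝ F x (Pi.single i 1)
        * fderiv ℝ (fderiv ℝ G) x w (Pi.single j 1) := by
    rw [Finset.sum_comm, ← Finset.sum_neg_distrib]
    refine Finset.sum_congr rfl fun i _ => ?_
    rw [← Finset.sum_neg_distrib]
    exact Finset.sum_congr rfl fun j _ => by rw [hanti]; ring
  simp only [hamiltonianVector, _root_.sum_apply, add_apply, smul_apply,
    ContinuousLinearMap.flip_apply, smul_eq_mul, Finset.sum_mul, hswap, sub_neg_eq_add,
    ← Finset.sum_add_distrib]
  exact Finset.sum_congr rfl fun i _ => Finset.sum_congr rfl fun j _ => by ring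

lemma pb_pb_apply (hP : ∀ i j, DifferentiableAt ℝ (fun y => P y i j) x)
    (hanti : ∀ i j, P x j i = -P x i j) {F G : (k → ℝ) → ℝ}
    (hF : ContDiffAt ℝ 2 F x) (hG : ContDiffAt ℝ 2 G x) (H : (k → ℝ) → ℝ) :
    pb P (pb P F G) H x
      = ∑ i, ∑ j, ∑ l, coordDoubleBracket P x i j l * fderiv ℝ F x (Pi.single i 1)
          * fderiv ℝ G x (Pi.single j 1) * fderiv ℝ H x (Pi.single l 1)
        + fderiv ℝ (fderiv ℝ F) x (hamiltonianVector P H x) (hamiltonianVector P G x)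
        - fderiv ℝ (fderiv ℝ G) x (hamiltonianVector P H x) (hamiltonianVector P F x) := by
  rw [pb_apply_eq_fderiv, fderiv_pb_apply hP hanti hF hG]
  simp only [fderiv_apply_hamiltonianVector, coordDoubleBracket, Finset.sum_mul]
  congr 2
  exact Finset.sum_congr rfl fun i _ => Finset.sum_congr rfl fun j _ =>
    Finset.sum_congr rfl fun l _ => by ring

theorem pb_jacobi_apply (hP : ∀ i j, DifferentiableAt ℝ (fun y => P y i j) x)
    (hanti : ∀ i j, P x j i = -P x i j) (hJ : ∀ i j l, coordJacobiator P x i j l = 0)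
    {F G H : (k → ℝ) → ℝ} (hF : ContDiffAt ℝ 2 F x) (hG : ContDiffAt ℝ 2 G x)
    (hH : ContDiffAt ℝ 2 H x) :
    pb P (pb P F G) H x + pb P (pb P G H) F x + pb P (pb P H F) G x = 0 := by
  simp only [coordJacobiator] at hJ
  set c := coordDoubleBracket P x
  set dF := fun i => fderiv ℝ F x (Pi.single i 1)
  set dG := fun i => fderiv ℝ G x (Pi.single i 1)
  set dH := fun i => fderiv ℝ H x (Pi.single i 1)
  have first_order : ∑ i, ∑ j, ∑ l, c i j l * dF i * dG j * dH l
      + ∑ i, ∑ j, ∑ l, c i j l * dG i * dH j * dF l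
      + ∑ i, ∑ j, ∑ l, c i j l * dH i * dF j * dG l = 0 := by
    have h2 : ∑ i, ∑ j, ∑ l, c i j l * dG i * dH j * dF l
        = ∑ i, ∑ j, ∑ l, c j l i * dF i * dG j * dH l :=
      .trans (Finset.sum_congr rfl fun _ _ => Finset.sum_congr rfl fun _ _ =>
        Finset.sum_congr rfl fun _ _ => by ring) (sum_sum_sum_cycle _ _)
    have h3 : ∑ i, ∑ j, ∑ l, c i j l * dH i * dF j * dG l
        = ∑ i, ∑ j, ∑ l, c l i j * dF i * dG j * dH l :=
      .trans (Finset.sum_congr rfl fun _ _ => Finset.sum_congr rfl fun _ _ =>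
        Finset.sum_congr rfl fun _ _ => by ring) (sum_sum_sum_cycle _ _).symm
    rw [h2, h3, ← Finset.sum_add_distrib, ← Finset.sum_add_distrib]
    refine Finset.sum_eq_zero fun i _ => ?_
    simp only [← Finset.sum_add_distrib]
    refine Finset.sum_eq_zero fun j _ => Finset.sum_eq_zero fun l _ => ?_
    linear_combination dF i * dG j * dH l * hJ i j l
  have hsymm {f : (k → ℝ) → ℝ} (hf : ContDiffAt ℝ 2 f x) :=
    hf.isSymmSndFDerivAt (by simp)
  rw [pb_pb_apply hP hanti hF hG, pb_pb_apply hP hanti hG hH, pb_pb_apply hP hanti hH hF]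
  linear_combination first_order + hsymm hF (hamiltonianVector P H x) (hamiltonianVector P G x)
    + hsymm hG (hamiltonianVector P F x) (hamiltonianVector P H x)
    + hsymm hH (hamiltonianVector P G x) (hamiltonianVector P F x)

end PoissonBracket

section Toda

variable {n : ℕ}

lemma todaLin_add_todaQuad {m : ℕ} (x : Fin m ⊕ Fin n → ℝ) (u v : Fin m ⊕ Fin n) :
    todaLin m n x u v + todaQuad m n x u v
      = todaQuad m n (x + Sum.elim (0 : Fin m → ℝ) 1) u v := by
  rcases u with i | i <;> rcases v with j | j <;>
    simp only [todaLin, todaQuad, Pi.add_apply, Pi.zero_apply, Pi.one_apply, Sum.elim_inl,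
      Sum.elim_inr, zero_add, add_zero] <;>
    ring

lemma todaQuad_inr_inr (x : Fin n ⊕ Fin n → ℝ) (i j : Fin n) :
    todaQuad n n x (.inr i) (.inr j)
      = x (.inl j) * kron ((j : ℕ) + 1 = i) - x (.inl i) * kron ((i : ℕ) + 1 = j) := by
  simp only [todaQuad, kron]
  split_ifs <;> grind

lemma todaQuad_antisymm (x : Fin n ⊕ Fin n → ℝ) (u v : Fin n ⊕ Fin n) :
    todaQuad n n x v u = -todaQuad n n x u v := by
  rcases u with i | i <;> rcases v with j | j <;> simp only [todaQuad, kron] <;> split_ifs <;>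
    first | omega | ring

lemma differentiable_todaQuad (u v : Fin n ⊕ Fin n) :
    Differentiable ℝ fun x => todaQuad n n x u v := by
  rcases u with i | i <;> rcases v with j | j
  case inr.inr => simp only [todaQuad_inr_inr]; fun_prop
  all_goals simp only [todaQuad]; fun_prop

variable (x : Fin n ⊕ Fin n → ℝ)

lemma coordDoubleBracket_todaQuad_inl_inl (i j : Fin n) (w : Fin n ⊕ Fin n) :
    coordDoubleBracket (todaQuad n n) x (.inl i) (.inl j) w
      = (todaQuad n n x (.inl i) w * x (.inl j) + x (.inl i) * todaQuad n n x (.inl j) w)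
        * (kron ((i : ℕ) = j + 1) - kron ((i : ℕ) + 1 = j)) := by
  have h : HasFDerivAt (fun y => todaQuad n n y (.inl i) (.inl j)) _ x :=
    ((hasFDerivAt_apply (𝕜 := ℝ) (.inl i) x).fun_mul
      (hasFDerivAt_apply (𝕜 := ℝ) (.inl j) x)).mul_const _
  rw [coordDoubleBracket, h.fderiv]
  simp only [add_apply, smul_apply, ContinuousLinearMap.proj_apply, smul_eq_mul]
  ring

lemma coordDoubleBracket_todaQuad_inl_inr (i j : Fin n) (w : Fin n ⊕ Fin n) :
    coordDoubleBracket (todaQuad n n) x (.inl i) (.inr j) w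
      = (todaQuad n n x (.inl i) w * x (.inr j) + x (.inl i) * todaQuad n n x (.inr j) w)
        * (kron ((i : ℕ) = j) - kron ((i : ℕ) + 1 = j)) := by
  have h : HasFDerivAt (fun y => todaQuad n n y (.inl i) (.inr j)) _ x :=
    ((hasFDerivAt_apply (𝕜 := ℝ) (.inl i) x).fun_mul
      (hasFDerivAt_apply (𝕜 := ℝ) (.inr j) x)).mul_const _
  rw [coordDoubleBracket, h.fderiv]
  simp only [add_apply, smul_apply, ContinuousLinearMap.proj_apply, smul_eq_mul]
  ring

lemma coordDoubleBracket_todaQuad_inr_inl (i j : Fin n) (w : Fin n ⊕ Fin n) :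
    coordDoubleBracket (todaQuad n n) x (.inr j) (.inl i) w
      = -(todaQuad n n x (.inl i) w * x (.inr j) + x (.inl i) * todaQuad n n x (.inr j) w)
        * (kron ((i : ℕ) = j) - kron ((i : ℕ) + 1 = j)) := by
  have h : HasFDerivAt (fun y => todaQuad n n y (.inr j) (.inl i)) _ x :=
    (((hasFDerivAt_apply (𝕜 := ℝ) (.inl i) x).fun_mul
      (hasFDerivAt_apply (𝕜 := ℝ) (.inr j) x)).mul_const _).fun_neg
  rw [coordDoubleBracket, h.fderiv]
  simp only [neg_apply, add_apply, smul_apply, ContinuousLinearMap.proj_apply, smul_eq_mul]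
  ring

lemma coordDoubleBracket_todaQuad_inr_inr (i j : Fin n) (w : Fin n ⊕ Fin n) :
    coordDoubleBracket (todaQuad n n) x (.inr i) (.inr j) w
      = todaQuad n n x (.inl j) w * kron ((j : ℕ) + 1 = i)
        - todaQuad n n x (.inl i) w * kron ((i : ℕ) + 1 = j) := by
  have h := ((hasFDerivAt_apply (𝕜 := ℝ) (.inl j) x).mul_const (kron ((j : ℕ) + 1 = i))).fun_sub
    ((hasFDerivAt_apply (𝕜 := ℝ) (.inl i) x).mul_const (kron ((i : ℕ) + 1 = j)))
  rw [coordDoubleBracket, funext fun y => todaQuad_inr_inr y i j, h.fderiv]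
  simp only [sub_apply, smul_apply, ContinuousLinearMap.proj_apply, smul_eq_mul]
  ring

lemma nat_near_cases (p q : ℕ) :
    p = q ∨ p + 1 = q ∨ q + 1 = p ∨ (p ≠ q ∧ p + 1 ≠ q ∧ q + 1 ≠ p) := by
  omega

lemma coordJacobiator_todaQuad (u v w : Fin n ⊕ Fin n) :
    coordJacobiator (todaQuad n n) x u v w = 0 := by
  -- Reading the coordinates through `A, B : ℕ → ℝ` lets `subst` identify coordinates whose
  -- indices are forced to be equal.
  obtain ⟨A, hA⟩ : ∃ A : ℕ → ℝ, ∀ p : Fin n, x (.inl p) = A p :=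
    ⟨fun p => if h : p < n then x (.inl ⟨p, h⟩) else 0, fun p => by simp⟩
  obtain ⟨B, hB⟩ : ∃ B : ℕ → ℝ, ∀ p : Fin n, x (.inr p) = B p :=
    ⟨fun p => if h : p < n then x (.inr ⟨p, h⟩) else 0, fun p => by simp⟩
  rcases u with i | i <;> rcases v with j | j <;> rcases w with l | l <;>
  simp only [coordJacobiator, coordDoubleBracket_todaQuad_inl_inl,
    coordDoubleBracket_todaQuad_inl_inr, coordDoubleBracket_todaQuad_inr_inl,
    coordDoubleBracket_todaQuad_inr_inr, todaQuad_inr_inr] <;>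
  simp only [todaQuad, hA, hB, kron] <;>
  generalize (i : ℕ) = a <;> generalize (j : ℕ) = b <;> generalize (l : ℕ) = c <;>
  rcases nat_near_cases a b with hab | hab | hab | hab <;>
  rcases nat_near_cases a c with hac | hac | hac | hac <;>
  rcases nat_near_cases b c with hbc | hbc | hbc | hbc <;>
  first | omega | (subst_vars; simp (disch := omega) only [if_neg]; ring1)

end Toda

/-- The linear Toda bracket `π₁` and the quadratic Toda bracket `π₂`
on `ℝ^{2n}` are compatible: their sum `π₁ + π₂` also satisfies the Jacobi identity. -/
theorem toda_brackets_compatible (n : ℕ) (F G H : (Fin n ⊕ Fin n → ℝ) → ℝ)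
    (hF : ContDiff ℝ ⊤ F) (hG : ContDiff ℝ ⊤ G) (hH : ContDiff ℝ ⊤ H) :
    pb (fun x u v => todaLin n n x u v + todaQuad n n x u v)
        (pb (fun x u v => todaLin n n x u v + todaQuad n n x u v) F G) H
      + pb (fun x u v => todaLin n n x u v + todaQuad n n x u v)
        (pb (fun x u v => todaLin n n x u v + todaQuad n n x u v) G H) F
      + pb (fun x u v => todaLin n n x u v + todaQuad n n x u v)
        (pb (fun x u v => todaLin n n x u v + todaQuad n n x u v) H F) G = 0 := by
  have hshift : (fun x u v => todaLin n n x u v + todaQuad n n x u v)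
      = fun x => todaQuad n n (x + Sum.elim (0 : Fin n → ℝ) 1) :=
    funext fun x => funext fun u => funext fun v => todaLin_add_todaQuad x u v
  rw [hshift]
  funext x
  exact pb_jacobi_apply
    (fun i j => (differentiableAt_comp_add_right _).2 (differentiable_todaQuad i j _))
    (fun i j => todaQuad_antisymm _ i j)
    (fun i j l => (coordJacobiator_comp_add_right (P := todaQuad n n) _ i j l).trans
      (coordJacobiator_todaQuad _ i j l))
    (hF.contDiffAt.of_le le_top) (hG.contDiffAt.of_le le_top) (hH.contDiffAt.of_le le_top)
end

section
/- The involution ψ on ℝ^{2n} defined by ψ(a₁,…,aₙ,b₁,…,bₙ) = (a₁,…,aₙ,−b₁,…,−bₙ) is an anti-Poisson map for the linear Toda bracket (ψ reverses the sign of π₁) and a Poisson automorphism for the quadratic Toda bracket π₂. -/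
/-- The involution `ψ(a₁,…,aₙ,b₁,…,bₙ) = (a₁,…,aₙ,−b₁,…,−bₙ)` on `ℝ^{2n}`. -/
noncomputable def psiT (n : ℕ) (x : Fin n ⊕ Fin n → ℝ) : Fin n ⊕ Fin n → ℝ := fun u =>
  match u with
  | Sum.inl i => x (Sum.inl i)
  | Sum.inr j => -(x (Sum.inr j))


noncomputable def psiL (n : ℕ) : (Fin n ⊕ Fin n → ℝ) →L[ℝ] (Fin n ⊕ Fin n → ℝ) :=
  ContinuousLinearMap.pi fun u =>
    match u with
    | Sum.inl i => ContinuousLinearMap.proj (Sum.inl i)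
    | Sum.inr j => -ContinuousLinearMap.proj (Sum.inr j)

lemma psiL_eq (n : ℕ) (x : Fin n ⊕ Fin n → ℝ) : psiL n x = psiT n x := by
  funext u; cases u <;> rfl

lemma fderiv_comp_psi (n : ℕ) (F : (Fin n ⊕ Fin n → ℝ) → ℝ) (hF : ContDiff ℝ (⊤ : ℕ∞) F)
    (x v : Fin n ⊕ Fin n → ℝ) :
    fderiv ℝ (F ∘ psiT n) x v = fderiv ℝ F (psiT n x) (psiT n v) := by
  have h : F ∘ psiT n = F ∘ (psiL n) := by
    funext y; simp [Function.comp, psiL_eq]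
  rw [h, fderiv_comp x (hF.differentiable (by simp)).differentiableAt
    (psiL n).differentiableAt, (psiL n).fderiv]
  simp [psiL_eq]

lemma psi_single_inl (n : ℕ) (i : Fin n) :
    psiT n (Pi.single (Sum.inl i) 1) = Pi.single (Sum.inl i) (1:ℝ) := by
  funext u; cases u <;> simp [psiT, Pi.single_apply]

lemma psi_single_inr (n : ℕ) (j : Fin n) :
    psiT n (Pi.single (Sum.inr j) 1) = -Pi.single (Sum.inr j) (1:ℝ) := by
  funext u; cases u <;> simp [psiT, Pi.single_apply]

/-- The involution `ψ(a,b) = (a,−b)` on `ℝ^{2n}` is an anti-Poisson map for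
the linear Toda bracket `π₁` (it reverses the sign of `π₁`) and a Poisson automorphism
for the quadratic Toda bracket `π₂`. -/
theorem psi_anti_poisson_linear_poisson_quadratic (n : ℕ)
    (F G : (Fin n ⊕ Fin n → ℝ) → ℝ) (hF : ContDiff ℝ (⊤ : ℕ∞) F) (hG : ContDiff ℝ (⊤ : ℕ∞) G) :
    pb (todaLin n n) (F ∘ psiT n) (G ∘ psiT n) = -((pb (todaLin n n) F G) ∘ psiT n)
      ∧ pb (todaQuad n n) (F ∘ psiT n) (G ∘ psiT n) = (pb (todaQuad n n) F G) ∘ psiT n := by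
  constructor
  · funext x
    simp only [pb, Pi.neg_apply, Function.comp_apply, ← Finset.sum_neg_distrib]
    refine Finset.sum_congr rfl fun u _ => Finset.sum_congr rfl fun v _ => ?_
    cases u <;> cases v <;>
      simp only [fderiv_comp_psi n F hF, fderiv_comp_psi n G hG, psi_single_inl,
        psi_single_inr, map_neg, todaLin, psiT] <;> ring
  · funext x
    simp only [pb, Function.comp_apply]
    refine Finset.sum_congr rfl fun u _ => Finset.sum_congr rfl fun v _ => ?_
    cases u <;> cases v <;>
      simp only [fderiv_comp_psi n F hF, fderiv_comp_psi n G hG, psi_single_inl,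
        psi_single_inr, map_neg, todaQuad, psiT] <;> ring
end

section
/- The quartic Volterra bracket on ℝⁿ defined by {aᵢ,a_{i+1}}⁴ = aᵢa_{i+1}(aᵢ + a_{i+1}) for i = 1,…,n−1, {aᵢ,a_{i+2}}⁴ = aᵢa_{i+1}a_{i+2} for i = 1,…,n−2, and {aᵢ,aⱼ}⁴ = 0 for |i−j| > 2, satisfies the Jacobi identity. -/
/-- The quartic Volterra bivector on `ℝⁿ`: `{aᵢ,a_{i+1}} = aᵢa_{i+1}(aᵢ+a_{i+1})`,
`{aᵢ,a_{i+2}} = aᵢa_{i+1}a_{i+2}`, zero for `|i−j| > 2`, extended antisymmetrically. -/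
noncomputable def volt4 (n : ℕ) (x : Fin n → ℝ) (i j : Fin n) : ℝ :=
  (if (i : ℕ) + 1 = (j : ℕ) then x i * x j * (x i + x j) else 0)
  + (if _h : (i : ℕ) + 2 = (j : ℕ) then x i * x ⟨(i : ℕ) + 1, by have := j.isLt; omega⟩ * x j else 0)
  - (if (j : ℕ) + 1 = (i : ℕ) then x j * x i * (x j + x i) else 0)
  - (if _h : (j : ℕ) + 2 = (i : ℕ) then x j * x ⟨(j : ℕ) + 1, by have := i.isLt; omega⟩ * x i else 0)


open Finset

namespace QV

variable {n : ℕ}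

/-- partial derivative in direction `k` -/
noncomputable def pd (k : Fin n) (f : (Fin n → ℝ) → ℝ) (x : Fin n → ℝ) : ℝ :=
  fderiv ℝ f x (Pi.single k 1)

lemma pd_add {f g : (Fin n → ℝ) → ℝ} {x : Fin n → ℝ} (k : Fin n)
    (hf : DifferentiableAt ℝ f x) (hg : DifferentiableAt ℝ g x) :
    pd k (fun y => f y + g y) x = pd k f x + pd k g x := by
  unfold pd; rw [fderiv_fun_add hf hg]; simp

lemma pd_sub {f g : (Fin n → ℝ) → ℝ} {x : Fin n → ℝ} (k : Fin n)
    (hf : DifferentiableAt ℝ f x) (hg : DifferentiableAt ℝ g x) :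
    pd k (fun y => f y - g y) x = pd k f x - pd k g x := by
  unfold pd; rw [fderiv_fun_sub hf hg]; simp

lemma pd_mul {f g : (Fin n → ℝ) → ℝ} {x : Fin n → ℝ} (k : Fin n)
    (hf : DifferentiableAt ℝ f x) (hg : DifferentiableAt ℝ g x) :
    pd k (fun y => f y * g y) x = f x * pd k g x + g x * pd k f x := by
  unfold pd; rw [fderiv_fun_mul hf hg]; simp

lemma pd_sum {ι : Type*} {s : Finset ι} {f : ι → (Fin n → ℝ) → ℝ} {x : Fin n → ℝ} (k : Fin n)
    (h : ∀ i ∈ s, DifferentiableAt ℝ (f i) x) :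
    pd k (fun y => ∑ i ∈ s, f i y) x = ∑ i ∈ s, pd k (f i) x := by
  unfold pd; rw [fderiv_fun_sum h]; simp

lemma pd_proj (k a : Fin n) (x : Fin n → ℝ) :
    pd k (fun y : Fin n → ℝ => y a) x = if a = k then 1 else 0 := by
  unfold pd
  have : fderiv ℝ (fun y : Fin n → ℝ => y a) x
      = ContinuousLinearMap.proj (R := ℝ) (φ := fun _ : Fin n => ℝ) a :=
    (ContinuousLinearMap.proj (R := ℝ) (φ := fun _ : Fin n => ℝ) a).fderiv
  rw [this]
  simp [Pi.single_apply]

lemma pd_ite (k : Fin n) (c : Prop) [Decidable c] (f : (Fin n → ℝ) → ℝ) (x : Fin n → ℝ) :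
    pd k (fun y => if c then f y else 0) x = if c then pd k f x else 0 := by
  by_cases h : c <;> simp [h, pd]

lemma pd_dite (k : Fin n) (c : Prop) [Decidable c] (f : c → (Fin n → ℝ) → ℝ) (x : Fin n → ℝ) :
    pd k (fun y => dite c (fun h => f h y) fun _ => 0) x
      = dite c (fun h => pd k (f h) x) fun _ => 0 := by
  by_cases h : c <;> simp [h, pd]

lemma pd_mono3 (k a b c : Fin n) (x : Fin n → ℝ) :
    pd k (fun y : Fin n → ℝ => y a * y b * y c) x
      = (if a = k then 1 else 0) * (x b * x c)
        + (if b = k then 1 else 0) * (x a * x c)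
        + (if c = k then 1 else 0) * (x a * x b) := by
  have h1 : DifferentiableAt ℝ (fun y : Fin n → ℝ => y a * y b) x := by fun_prop
  have h2 : DifferentiableAt ℝ (fun y : Fin n → ℝ => y a) x := by fun_prop
  have h3 : DifferentiableAt ℝ (fun y : Fin n → ℝ => y b) x := by fun_prop
  have h4 : DifferentiableAt ℝ (fun y : Fin n → ℝ => y c) x := by fun_prop
  rw [pd_mul k h1 h4, pd_mul k h2 h3, pd_proj, pd_proj, pd_proj]
  ring


lemma V4_eq (i j : Fin n) : (fun y : Fin n → ℝ => volt4 n y i j) = fun y =>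
    ((if (i : ℕ) + 1 = (j : ℕ) then y i * y i * y j + y i * y j * y j else 0)
     + (if h : (i : ℕ) + 2 = (j : ℕ) then
          y i * y ⟨(i : ℕ) + 1, by have := j.isLt; omega⟩ * y j else 0))
    - ((if (j : ℕ) + 1 = (i : ℕ) then y j * y j * y i + y j * y i * y i else 0)
     + (if h : (j : ℕ) + 2 = (i : ℕ) then
          y j * y ⟨(j : ℕ) + 1, by have := i.isLt; omega⟩ * y i else 0)) := by
  funext y
  unfold volt4
  split_ifs <;> ring

lemma V4_contDiff (i j : Fin n) : ContDiff ℝ (⊤ : ℕ∞) (fun y : Fin n → ℝ => volt4 n y i j) := by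
  rw [V4_eq]
  apply ContDiff.sub <;> apply ContDiff.add
  · by_cases h : (i : ℕ) + 1 = (j : ℕ)
    · simp only [if_pos h]; fun_prop
    · simp only [if_neg h]; fun_prop
  · by_cases h : (i : ℕ) + 2 = (j : ℕ)
    · simp only [dif_pos h]; fun_prop
    · simp only [dif_neg h]; fun_prop
  · by_cases h : (j : ℕ) + 1 = (i : ℕ)
    · simp only [if_pos h]; fun_prop
    · simp only [if_neg h]; fun_prop
  · by_cases h : (j : ℕ) + 2 = (i : ℕ)
    · simp only [dif_pos h]; fun_prop
    · simp only [dif_neg h]; fun_prop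

/-- closed form of the derivative of an entry of the bivector -/
noncomputable def dV (k i j : Fin n) (x : Fin n → ℝ) : ℝ :=
  ((if (i : ℕ) + 1 = (j : ℕ) then
      ((if i = k then 1 else 0) * (x i * x j) + (if i = k then 1 else 0) * (x i * x j)
        + (if j = k then 1 else 0) * (x i * x i))
      + ((if i = k then 1 else 0) * (x j * x j) + (if j = k then 1 else 0) * (x i * x j)
        + (if j = k then 1 else 0) * (x i * x j)) else 0)
   + (if h : (i : ℕ) + 2 = (j : ℕ) then
      ((if i = k then 1 else 0) * (x ⟨(i : ℕ) + 1, by have := j.isLt; omega⟩ * x j)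
        + (if (⟨(i : ℕ) + 1, by have := j.isLt; omega⟩ : Fin n) = k then 1 else 0) * (x i * x j)
        + (if j = k then 1 else 0) * (x i * x ⟨(i : ℕ) + 1, by have := j.isLt; omega⟩)) else 0))
  - ((if (j : ℕ) + 1 = (i : ℕ) then
      ((if j = k then 1 else 0) * (x j * x i) + (if j = k then 1 else 0) * (x j * x i)
        + (if i = k then 1 else 0) * (x j * x j))
      + ((if j = k then 1 else 0) * (x i * x i) + (if i = k then 1 else 0) * (x j * x i)
        + (if i = k then 1 else 0) * (x j * x i)) else 0)
   + (if h : (j : ℕ) + 2 = (i : ℕ) then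
      ((if j = k then 1 else 0) * (x ⟨(j : ℕ) + 1, by have := i.isLt; omega⟩ * x i)
        + (if (⟨(j : ℕ) + 1, by have := i.isLt; omega⟩ : Fin n) = k then 1 else 0) * (x j * x i)
        + (if i = k then 1 else 0) * (x j * x ⟨(j : ℕ) + 1, by have := i.isLt; omega⟩)) else 0))

lemma pd_V4 (k i j : Fin n) (x : Fin n → ℝ) :
    pd k (fun y => volt4 n y i j) x = dV k i j x := by
  rw [V4_eq]
  have dm : ∀ a b c : Fin n, DifferentiableAt ℝ (fun y : Fin n → ℝ => y a * y b * y c) x := by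
    intro a b c; fun_prop
  have d1 : ∀ a b c : Fin n, DifferentiableAt ℝ
      (fun y : Fin n → ℝ => y a * y a * y b + y a * y b * y b) x := by
    intro a b c; fun_prop
  have hA : ∀ (a b : Fin n), DifferentiableAt ℝ
      (fun y : Fin n → ℝ => if (a : ℕ) + 1 = (b : ℕ) then y a * y a * y b + y a * y b * y b else 0) x := by
    intro a b
    by_cases h : (a : ℕ) + 1 = (b : ℕ)
    · simp only [if_pos h]; fun_prop
    · simp only [if_neg h]; fun_prop
  have hB : ∀ (a b : Fin n), DifferentiableAt ℝ
      (fun y : Fin n → ℝ => if h : (a : ℕ) + 2 = (b : ℕ) then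
        y a * y ⟨(a : ℕ) + 1, by have := b.isLt; omega⟩ * y b else 0) x := by
    intro a b
    by_cases h : (a : ℕ) + 2 = (b : ℕ)
    · simp only [dif_pos h]; fun_prop
    · simp only [dif_neg h]; fun_prop
  rw [pd_sub k (by exact (hA i j).add (hB i j)) (by exact (hA j i).add (hB j i)),
    pd_add k (hA i j) (hB i j), pd_add k (hA j i) (hB j i),
    pd_ite, pd_ite, pd_dite, pd_dite]
  unfold dV
  congr 1
  · congr 1
    · by_cases h : (i : ℕ) + 1 = (j : ℕ)
      · rw [if_pos h, if_pos h, pd_add k (by fun_prop) (by fun_prop), pd_mono3, pd_mono3]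
      · rw [if_neg h, if_neg h]
    · by_cases h : (i : ℕ) + 2 = (j : ℕ)
      · rw [dif_pos h, dif_pos h, pd_mono3]
      · rw [dif_neg h, dif_neg h]
  · congr 1
    · by_cases h : (j : ℕ) + 1 = (i : ℕ)
      · rw [if_pos h, if_pos h, pd_add k (by fun_prop) (by fun_prop), pd_mono3, pd_mono3]
      · rw [if_neg h, if_neg h]
    · by_cases h : (j : ℕ) + 2 = (i : ℕ)
      · rw [dif_pos h, dif_pos h, pd_mono3]
      · rw [dif_neg h, dif_neg h]
lemma sum_mul_ite (c : Prop) [Decidable c] (f g : Fin n → ℝ) :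
    ∑ k, f k * (if c then g k else 0) = if c then ∑ k, f k * g k else 0 := by
  split_ifs <;> simp

lemma sum_mul_dite (c : Prop) [Decidable c] (f : Fin n → ℝ) (g : c → Fin n → ℝ) :
    ∑ k, f k * (dite c (fun h => g h k) fun _ => 0)
      = dite c (fun h => ∑ k, f k * g h k) fun _ => 0 := by
  split_ifs <;> simp

lemma sum_delta_mul (a : Fin n) (f : Fin n → ℝ) (coef : ℝ) :
    ∑ k, f k * ((if a = k then 1 else 0) * coef) = f a * coef := by
  rw [Finset.sum_eq_single a]
  · simp
  · intro b _ hb; simp [Ne.symm hb]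
  · simp

/-- the closed form of `∑ k, V4 x k c * dV k a b x` -/
noncomputable def TF (i j l : Fin n) (x : Fin n → ℝ) : ℝ :=
  ((if (i : ℕ) + 1 = (j : ℕ) then
      (volt4 n x i l * (x i * x j) + volt4 n x i l * (x i * x j) + volt4 n x j l * (x i * x i))
      + (volt4 n x i l * (x j * x j) + volt4 n x j l * (x i * x j) + volt4 n x j l * (x i * x j)) else 0)
   + (if h : (i : ℕ) + 2 = (j : ℕ) then
      volt4 n x i l * (x ⟨(i : ℕ) + 1, by have := j.isLt; omega⟩ * x j)
      + volt4 n x ⟨(i : ℕ) + 1, by have := j.isLt; omega⟩ l * (x i * x j)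
      + volt4 n x j l * (x i * x ⟨(i : ℕ) + 1, by have := j.isLt; omega⟩) else 0))
  - ((if (j : ℕ) + 1 = (i : ℕ) then
      (volt4 n x j l * (x j * x i) + volt4 n x j l * (x j * x i) + volt4 n x i l * (x j * x j))
      + (volt4 n x j l * (x i * x i) + volt4 n x i l * (x j * x i) + volt4 n x i l * (x j * x i)) else 0)
   + (if h : (j : ℕ) + 2 = (i : ℕ) then
      volt4 n x j l * (x ⟨(j : ℕ) + 1, by have := i.isLt; omega⟩ * x i)
      + volt4 n x ⟨(j : ℕ) + 1, by have := i.isLt; omega⟩ l * (x j * x i)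
      + volt4 n x i l * (x j * x ⟨(j : ℕ) + 1, by have := i.isLt; omega⟩) else 0))

lemma T_eq (x : Fin n → ℝ) (i j l : Fin n) :
    ∑ k, volt4 n x k l * dV k i j x = TF i j l x := by
  simp only [dV, mul_sub, mul_add, Finset.sum_sub_distrib, Finset.sum_add_distrib,
    sum_mul_ite, sum_mul_dite, sum_delta_mul]
  rfl

lemma TF_swap {i j l : Fin n} {x : Fin n → ℝ} : TF j i l x = - TF i j l x := by
  unfold TF; ring

lemma V4_far {x : Fin n → ℝ} {p c : Fin n} (h1 : ¬((p : ℕ) + 1 = (c : ℕ)))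
    (h2 : ¬((p : ℕ) + 2 = (c : ℕ))) (h3 : ¬((c : ℕ) + 1 = (p : ℕ)))
    (h4 : ¬((c : ℕ) + 2 = (p : ℕ))) : volt4 n x p c = 0 := by
  unfold volt4; rw [if_neg h1, dif_neg h2, if_neg h3, dif_neg h4]; ring

lemma TF_far {x : Fin n → ℝ} {i j l : Fin n} (h1 : ¬((i : ℕ) + 1 = (j : ℕ)))
    (h2 : ¬((i : ℕ) + 2 = (j : ℕ))) (h3 : ¬((j : ℕ) + 1 = (i : ℕ)))
    (h4 : ¬((j : ℕ) + 2 = (i : ℕ))) : TF i j l x = 0 := by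
  unfold TF; rw [if_neg h1, dif_neg h2, if_neg h3, dif_neg h4]; ring

noncomputable def Sfun (x : Fin n → ℝ) (i j l : Fin n) : ℝ :=
  TF i j l x + TF j l i x + TF l i j x

lemma Sfun_cyc (x : Fin n → ℝ) (i j l : Fin n) : Sfun x i j l = Sfun x j l i := by
  unfold Sfun; ring

lemma Sfun_swap (x : Fin n → ℝ) (i j l : Fin n) : Sfun x j i l = - Sfun x i j l := by
  unfold Sfun
  rw [show TF j i l x = - TF i j l x from TF_swap,
    show TF i l j x = - TF l i j x from TF_swap,
    show TF l j i x = - TF j l i x from TF_swap]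
  ring

lemma Sfun_diag (x : Fin n → ℝ) (i l : Fin n) : Sfun x i i l = 0 := by
  have := Sfun_swap x i i l; linarith

lemma Ssorted (x : Fin n → ℝ) {i j l : Fin n} (hij : (i : ℕ) < (j : ℕ))
    (hjl : (j : ℕ) < (l : ℕ)) : Sfun x i j l = 0 := by
  unfold Sfun
  have hln := l.isLt
  rcases (show (j : ℕ) = (i : ℕ) + 1 ∨ (j : ℕ) = (i : ℕ) + 2 ∨ (i : ℕ) + 3 ≤ (j : ℕ) by omega)
    with hj | hj | hj <;>
  rcases (show (l : ℕ) = (j : ℕ) + 1 ∨ (l : ℕ) = (j : ℕ) + 2 ∨ (j : ℕ) + 3 ≤ (l : ℕ) by omega)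
    with hl | hl | hl
  -- hard cases
  · have hb1 : (i : ℕ) + 1 < n := by omega
    have hb2 : (i : ℕ) + 2 < n := by omega
    have hjf : j = ⟨(i : ℕ) + 1, hb1⟩ := Fin.ext (show (j : ℕ) = (i : ℕ) + 1 by omega)
    have hlf : l = ⟨(i : ℕ) + 2, hb2⟩ := Fin.ext (show (l : ℕ) = (i : ℕ) + 2 by omega)
    rw [hlf, hjf]
    simp +arith [TF, volt4]
    ring
  · have hb1 : (i : ℕ) + 1 < n := by omega
    have hb2 : (i : ℕ) + 3 < n := by omega
    have hjf : j = ⟨(i : ℕ) + 1, hb1⟩ := Fin.ext (show (j : ℕ) = (i : ℕ) + 1 by omega)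
    have hlf : l = ⟨(i : ℕ) + 3, hb2⟩ := Fin.ext (show (l : ℕ) = (i : ℕ) + 3 by omega)
    rw [hlf, hjf]
    simp +arith [TF, volt4]
    ring
  · -- j = i+1, l far : gates (i,j) true; (j,l) far; (l,i) far
    rw [TF_far (l := i) (by omega) (by omega) (by omega) (by omega),
      TF_far (l := j) (by omega) (by omega) (by omega) (by omega)]
    -- remaining: TF i j l
    unfold TF
    rw [if_pos hj.symm, dif_neg (by omega), if_neg (by omega), dif_neg (by omega)]
    rw [V4_far (p := i) (c := l) (by omega) (by omega) (by omega) (by omega),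
      V4_far (p := j) (c := l) (by omega) (by omega) (by omega) (by omega)]
    ring
  · have hb1 : (i : ℕ) + 2 < n := by omega
    have hb2 : (i : ℕ) + 3 < n := by omega
    have hjf : j = ⟨(i : ℕ) + 2, hb1⟩ := Fin.ext (show (j : ℕ) = (i : ℕ) + 2 by omega)
    have hlf : l = ⟨(i : ℕ) + 3, hb2⟩ := Fin.ext (show (l : ℕ) = (i : ℕ) + 3 by omega)
    rw [hlf, hjf]
    simp +arith [TF, volt4]
    ring
  · have hb1 : (i : ℕ) + 2 < n := by omega
    have hb2 : (i : ℕ) + 4 < n := by omega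
    have hjf : j = ⟨(i : ℕ) + 2, hb1⟩ := Fin.ext (show (j : ℕ) = (i : ℕ) + 2 by omega)
    have hlf : l = ⟨(i : ℕ) + 4, hb2⟩ := Fin.ext (show (l : ℕ) = (i : ℕ) + 4 by omega)
    rw [hlf, hjf]
    simp +arith [TF, volt4]
    ring
  · -- j = i+2, l far
    rw [TF_far (l := i) (by omega) (by omega) (by omega) (by omega),
      TF_far (l := j) (by omega) (by omega) (by omega) (by omega)]
    unfold TF
    rw [if_neg (by omega), dif_pos hj.symm, if_neg (by omega), dif_neg (by omega)]
    rw [V4_far (p := i) (c := l) (by omega) (by omega) (by omega) (by omega),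
      V4_far (p := j) (c := l) (by omega) (by omega) (by omega) (by omega),
      V4_far (p := ⟨(i : ℕ) + 1, by omega⟩) (c := l)
        (by show ¬((i : ℕ) + 1 + 1 = (l : ℕ)); omega)
        (by show ¬((i : ℕ) + 1 + 2 = (l : ℕ)); omega)
        (by show ¬((l : ℕ) + 1 = (i : ℕ) + 1); omega)
        (by show ¬((l : ℕ) + 2 = (i : ℕ) + 1); omega)]
    ring
  · -- j far, l = j+1
    rw [TF_far (l := l) (by omega) (by omega) (by omega) (by omega),
      TF_far (l := j) (by omega) (by omega) (by omega) (by omega)]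
    -- remaining TF j l i
    unfold TF
    rw [if_pos hl.symm, dif_neg (by omega), if_neg (by omega), dif_neg (by omega)]
    rw [V4_far (p := j) (c := i) (by omega) (by omega) (by omega) (by omega),
      V4_far (p := l) (c := i) (by omega) (by omega) (by omega) (by omega)]
    ring
  · -- j far, l = j+2
    rw [TF_far (l := l) (by omega) (by omega) (by omega) (by omega),
      TF_far (l := j) (by omega) (by omega) (by omega) (by omega)]
    unfold TF
    rw [if_neg (by omega), dif_pos hl.symm, if_neg (by omega), dif_neg (by omega)]
    rw [V4_far (p := j) (c := i) (by omega) (by omega) (by omega) (by omega),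
      V4_far (p := l) (c := i) (by omega) (by omega) (by omega) (by omega),
      V4_far (p := ⟨(j : ℕ) + 1, by omega⟩) (c := i)
        (by show ¬((j : ℕ) + 1 + 1 = (i : ℕ)); omega)
        (by show ¬((j : ℕ) + 1 + 2 = (i : ℕ)); omega)
        (by show ¬((i : ℕ) + 1 = (j : ℕ) + 1); omega)
        (by show ¬((i : ℕ) + 2 = (j : ℕ) + 1); omega)]
    ring
  · -- all far
    rw [TF_far (l := l) (by omega) (by omega) (by omega) (by omega),
      TF_far (l := i) (by omega) (by omega) (by omega) (by omega),
      TF_far (l := j) (by omega) (by omega) (by omega) (by omega)]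
    ring

lemma Sfun_zero (x : Fin n → ℝ) (i j l : Fin n) : Sfun x i j l = 0 := by
  rcases lt_trichotomy (i : ℕ) (j : ℕ) with hij | hij | hij
  · rcases lt_trichotomy (j : ℕ) (l : ℕ) with hjl | hjl | hjl
    · exact Ssorted x hij hjl
    · rw [show l = j from Fin.ext hjl.symm, Sfun_cyc]
      exact Sfun_diag x j i
    · rcases lt_trichotomy (i : ℕ) (l : ℕ) with hil | hil | hil
      · -- i < l < j
        rw [Sfun_swap, Sfun_cyc]
        rw [Ssorted x hil hjl]; ring
      · rw [show l = i from Fin.ext hil.symm, Sfun_cyc, Sfun_cyc]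
        exact Sfun_diag x i j
      · -- l < i < j
        rw [Sfun_cyc, Sfun_cyc]
        exact Ssorted x hil hij
  · rw [show j = i from Fin.ext hij.symm]
    exact Sfun_diag x i l
  · rcases lt_trichotomy (i : ℕ) (l : ℕ) with hil | hil | hil
    · -- j < i < l
      rw [Sfun_swap, Ssorted x hij hil]; ring
    · rw [show l = i from Fin.ext hil.symm, Sfun_cyc, Sfun_cyc]
      exact Sfun_diag x i j
    · rcases lt_trichotomy (j : ℕ) (l : ℕ) with hjl | hjl | hjl
      · -- j < l < i
        rw [Sfun_cyc, Ssorted x hjl hil]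
      · rw [show l = j from Fin.ext hjl.symm, Sfun_cyc]
        exact Sfun_diag x j i
      · -- l < j < i
        rw [Sfun_swap, Sfun_cyc, Sfun_cyc, Ssorted x hjl hij]; ring

lemma schouten (x : Fin n → ℝ) (i j l : Fin n) :
    ∑ k, (volt4 n x k l * dV k i j x + volt4 n x k i * dV k j l x + volt4 n x k j * dV k l i x) = 0 := by
  rw [Finset.sum_add_distrib, Finset.sum_add_distrib, T_eq, T_eq, T_eq]
  exact Sfun_zero x i j l

lemma contDiff_pd {F : (Fin n → ℝ) → ℝ} (hF : ContDiff ℝ (⊤ : ℕ∞) F) (i : Fin n) :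
    ContDiff ℝ (⊤ : ℕ∞) (pd i F) := by
  have h := (ContinuousLinearMap.apply ℝ ℝ (Pi.single i (1 : ℝ))).contDiff.comp
    (hF.fderiv_right (m := (⊤ : ℕ∞)) le_rfl)
  exact h

lemma pd_of_fderiv {F : (Fin n → ℝ) → ℝ} (hF : ContDiff ℝ (⊤ : ℕ∞) F) (v : Fin n → ℝ)
    (x w : Fin n → ℝ) :
    fderiv ℝ (fun y => fderiv ℝ F y v) x w = fderiv ℝ (fderiv ℝ F) x w v := by
  have h1 : DifferentiableAt ℝ (fderiv ℝ F) x :=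
    ((hF.fderiv_right (m := (⊤ : ℕ∞)) le_rfl).differentiable (by simp)).differentiableAt
  have := (ContinuousLinearMap.apply ℝ ℝ v).hasFDerivAt.comp x h1.hasFDerivAt
  simpa using this.fderiv ▸ rfl

lemma pd_pd_symm {F : (Fin n → ℝ) → ℝ} (hF : ContDiff ℝ (⊤ : ℕ∞) F) (k i : Fin n) (x : Fin n → ℝ) :
    pd k (pd i F) x = pd i (pd k F) x := by
  unfold pd
  rw [pd_of_fderiv hF _ x _, pd_of_fderiv hF _ x _]
  exact (hF.contDiffAt.isSymmSndFDerivAt (by rw [minSmoothness_of_isRCLikeNormedField]; exact WithTop.coe_le_coe.mpr le_top)) _ _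

lemma V4_antisymm (x : Fin n → ℝ) (i j : Fin n) : volt4 n x j i = - volt4 n x i j := by
  unfold volt4; ring

/-- summands of `pb` are smooth -/
lemma pb_summand_contDiff {F G : (Fin n → ℝ) → ℝ} (hF : ContDiff ℝ (⊤ : ℕ∞) F)
    (hG : ContDiff ℝ (⊤ : ℕ∞) G) (i j : Fin n) :
    ContDiff ℝ (⊤ : ℕ∞) (fun y => volt4 n y i j * pd i F y * pd j G y) :=
  ((V4_contDiff i j).mul (contDiff_pd hF i)).mul (contDiff_pd hG j)

lemma pd_pbV {F G : (Fin n → ℝ) → ℝ} (hF : ContDiff ℝ (⊤ : ℕ∞) F) (hG : ContDiff ℝ (⊤ : ℕ∞) G)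
    (k : Fin n) (x : Fin n → ℝ) :
    pd k (fun y => ∑ i, ∑ j, volt4 n y i j * pd i F y * pd j G y) x
      = ∑ i, ∑ j,
          (dV k i j x * pd i F x * pd j G x
           + volt4 n x i j * pd k (pd i F) x * pd j G x
           + volt4 n x i j * pd i F x * pd k (pd j G) x) := by
  rw [pd_sum k (fun i _ => (DifferentiableAt.fun_sum fun j _ =>
    ((pb_summand_contDiff hF hG i j).differentiable (by simp)).differentiableAt))]
  refine Finset.sum_congr rfl fun i _ => ?_
  rw [pd_sum k (fun j _ =>
    ((pb_summand_contDiff hF hG i j).differentiable (by simp)).differentiableAt)]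
  refine Finset.sum_congr rfl fun j _ => ?_
  have h1 : DifferentiableAt ℝ (fun y => volt4 n y i j * pd i F y) x :=
    (((V4_contDiff i j).mul (contDiff_pd hF i)).differentiable (by simp)).differentiableAt
  have h2 : DifferentiableAt ℝ (pd j G) x :=
    ((contDiff_pd hG j).differentiable (by simp)).differentiableAt
  have h3 : DifferentiableAt ℝ (fun y => volt4 n y i j) x :=
    ((V4_contDiff i j).differentiable (by simp)).differentiableAt
  have h4 : DifferentiableAt ℝ (pd i F) x :=
    ((contDiff_pd hF i).differentiable (by simp)).differentiableAt
  rw [pd_mul k h1 h2, pd_mul k h3 h4, pd_V4]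
  ring

section Reindex
variable {M : Type*} [AddCommMonoid M]

lemma sum4_hess (c : Fin n → Fin n → Fin n → Fin n → M) :
    (∑ k, ∑ l, ∑ i, ∑ j, c k l i j) = ∑ k, ∑ l, ∑ i, ∑ j, c i j l k := by
  let e : (Fin n × Fin n × Fin n × Fin n) ≃ (Fin n × Fin n × Fin n × Fin n) :=
    ⟨fun p => (p.2.2.1, p.2.2.2, p.2.1, p.1), fun q => (q.2.2.2, q.2.2.1, q.1, q.2.1),
      fun p => rfl, fun p => rfl⟩
  calc (∑ k, ∑ l, ∑ i, ∑ j, c k l i j)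
      = ∑ p : Fin n × Fin n × Fin n × Fin n, c p.1 p.2.1 p.2.2.1 p.2.2.2 := by
        simp [Fintype.sum_prod_type]
    _ = ∑ p : Fin n × Fin n × Fin n × Fin n, c p.2.2.1 p.2.2.2 p.2.1 p.1 :=
        (Equiv.sum_comp e (fun p => c p.1 p.2.1 p.2.2.1 p.2.2.2)).symm
    _ = ∑ k, ∑ l, ∑ i, ∑ j, c i j l k := by
        simp [Fintype.sum_prod_type]

lemma sum4_fo2 (c : Fin n → Fin n → Fin n → Fin n → M) :
    (∑ k, ∑ l, ∑ i, ∑ j, c k l i j) = ∑ k, ∑ l, ∑ i, ∑ j, c k i j l := by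
  let e : (Fin n × Fin n × Fin n × Fin n) ≃ (Fin n × Fin n × Fin n × Fin n) :=
    ⟨fun p => (p.1, p.2.2.1, p.2.2.2, p.2.1), fun q => (q.1, q.2.2.2, q.2.1, q.2.2.1),
      fun p => rfl, fun p => rfl⟩
  calc (∑ k, ∑ l, ∑ i, ∑ j, c k l i j)
      = ∑ p : Fin n × Fin n × Fin n × Fin n, c p.1 p.2.1 p.2.2.1 p.2.2.2 := by
        simp [Fintype.sum_prod_type]
    _ = ∑ p : Fin n × Fin n × Fin n × Fin n, c p.1 p.2.2.1 p.2.2.2 p.2.1 :=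
        (Equiv.sum_comp e (fun p => c p.1 p.2.1 p.2.2.1 p.2.2.2)).symm
    _ = ∑ k, ∑ l, ∑ i, ∑ j, c k i j l := by
        simp [Fintype.sum_prod_type]

lemma sum4_fo3 (c : Fin n → Fin n → Fin n → Fin n → M) :
    (∑ k, ∑ l, ∑ i, ∑ j, c k l i j) = ∑ k, ∑ l, ∑ i, ∑ j, c k j l i := by
  let e : (Fin n × Fin n × Fin n × Fin n) ≃ (Fin n × Fin n × Fin n × Fin n) :=
    ⟨fun p => (p.1, p.2.2.2, p.2.1, p.2.2.1), fun q => (q.1, q.2.2.1, q.2.2.2, q.2.1),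
      fun p => rfl, fun p => rfl⟩
  calc (∑ k, ∑ l, ∑ i, ∑ j, c k l i j)
      = ∑ p : Fin n × Fin n × Fin n × Fin n, c p.1 p.2.1 p.2.2.1 p.2.2.2 := by
        simp [Fintype.sum_prod_type]
    _ = ∑ p : Fin n × Fin n × Fin n × Fin n, c p.1 p.2.2.2 p.2.1 p.2.2.1 :=
        (Equiv.sum_comp e (fun p => c p.1 p.2.1 p.2.2.1 p.2.2.2)).symm
    _ = ∑ k, ∑ l, ∑ i, ∑ j, c k j l i := by
        simp [Fintype.sum_prod_type]

lemma sum4_rot (c : Fin n → Fin n → Fin n → Fin n → M) :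
    (∑ k, ∑ l, ∑ i, ∑ j, c k l i j) = ∑ l, ∑ i, ∑ j, ∑ k, c k l i j := by
  let e : (Fin n × Fin n × Fin n × Fin n) ≃ (Fin n × Fin n × Fin n × Fin n) :=
    ⟨fun p => (p.2.2.2, p.1, p.2.1, p.2.2.1), fun q => (q.2.1, q.2.2.1, q.2.2.2, q.1),
      fun p => rfl, fun p => rfl⟩
  calc (∑ k, ∑ l, ∑ i, ∑ j, c k l i j)
      = ∑ p : Fin n × Fin n × Fin n × Fin n, c p.1 p.2.1 p.2.2.1 p.2.2.2 := by
        simp [Fintype.sum_prod_type]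
    _ = ∑ p : Fin n × Fin n × Fin n × Fin n, c p.2.2.2 p.1 p.2.1 p.2.2.1 :=
        (Equiv.sum_comp e (fun p => c p.1 p.2.1 p.2.2.1 p.2.2.2)).symm
    _ = ∑ l, ∑ i, ∑ j, ∑ k, c k l i j := by
        simp [Fintype.sum_prod_type]

end Reindex

lemma hess_cancel (p w : Fin n → Fin n → ℝ) (u v : Fin n → ℝ)
    (hp : ∀ a b, p b a = - p a b) (hw : ∀ a b, w a b = w b a) :
    ((∑ k, ∑ l, ∑ i, ∑ j, p k l * p i j * w k i * u j * v l)
      + ∑ k, ∑ l, ∑ i, ∑ j, p k l * p i j * v i * w k j * u l) = 0 := by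
  have h2 : (∑ k, ∑ l, ∑ i, ∑ j, p k l * p i j * v i * w k j * u l)
      = ∑ k, ∑ l, ∑ i, ∑ j, p i j * p l k * v l * w i k * u j :=
    sum4_hess (fun k l i j => p k l * p i j * v i * w k j * u l)
  have h3 : ∀ k l i j : Fin n, p i j * p l k * v l * w i k * u j
      = - (p k l * p i j * w k i * u j * v l) := by
    intro k l i j; rw [hp k l, hw i k]; ring
  rw [h2]
  simp only [h3, Finset.sum_neg_distrib]
  ring

lemma fo_cancel (p : Fin n → Fin n → ℝ) (q : Fin n → Fin n → Fin n → ℝ) (u v w : Fin n → ℝ)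
    (hs : ∀ i j l : Fin n, ∑ k, (p k l * q k i j + p k i * q k j l + p k j * q k l i) = 0) :
    ((∑ k, ∑ l, ∑ i, ∑ j, p k l * q k i j * u i * v j * w l)
      + (∑ k, ∑ l, ∑ i, ∑ j, p k l * q k i j * v i * w j * u l)
      + ∑ k, ∑ l, ∑ i, ∑ j, p k l * q k i j * w i * u j * v l) = 0 := by
  have h2 : (∑ k, ∑ l, ∑ i, ∑ j, p k l * q k i j * v i * w j * u l)
      = ∑ k, ∑ l, ∑ i, ∑ j, p k i * q k j l * v j * w l * u i :=
    sum4_fo2 (fun k l i j => p k l * q k i j * v i * w j * u l)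
  have h3 : (∑ k, ∑ l, ∑ i, ∑ j, p k l * q k i j * w i * u j * v l)
      = ∑ k, ∑ l, ∑ i, ∑ j, p k j * q k l i * w l * u i * v j :=
    sum4_fo3 (fun k l i j => p k l * q k i j * w i * u j * v l)
  rw [h2, h3]
  have h4 : (∑ k, ∑ l, ∑ i, ∑ j,
        (p k l * q k i j * u i * v j * w l + p k i * q k j l * v j * w l * u i
          + p k j * q k l i * w l * u i * v j)) = 0 := by
    rw [sum4_rot]
    refine Finset.sum_eq_zero fun l _ => Finset.sum_eq_zero fun i _ =>
      Finset.sum_eq_zero fun j _ => ?_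
    calc (∑ k, (p k l * q k i j * u i * v j * w l + p k i * q k j l * v j * w l * u i
            + p k j * q k l i * w l * u i * v j))
        = ∑ k, (u i * v j * w l)
            * (p k l * q k i j + p k i * q k j l + p k j * q k l i) :=
          Finset.sum_congr rfl fun k _ => by ring
      _ = (u i * v j * w l) * ∑ k, (p k l * q k i j + p k i * q k j l + p k j * q k l i) :=
          (Finset.mul_sum _ _ _).symm
      _ = 0 := by rw [hs i j l, mul_zero]
  calc _ = ∑ k, ∑ l, ∑ i, ∑ j,
        (p k l * q k i j * u i * v j * w l + p k i * q k j l * v j * w l * u i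
          + p k j * q k l i * w l * u i * v j) := by
        simp only [Finset.sum_add_distrib]
    _ = 0 := h4

lemma pb_pb_expand {F G H : (Fin n → ℝ) → ℝ} (hF : ContDiff ℝ (⊤ : ℕ∞) F) (hG : ContDiff ℝ (⊤ : ℕ∞) G)
    (x : Fin n → ℝ) :
    (∑ k, ∑ l, volt4 n x k l
        * pd k (fun y => ∑ i, ∑ j, volt4 n y i j * pd i F y * pd j G y) x * pd l H x)
      = ∑ k, ∑ l, ∑ i, ∑ j,
          (volt4 n x k l * dV k i j x * pd i F x * pd j G x * pd l H x
           + volt4 n x k l * volt4 n x i j * pd k (pd i F) x * pd j G x * pd l H x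
           + volt4 n x k l * volt4 n x i j * pd i F x * pd k (pd j G) x * pd l H x) := by
  refine Finset.sum_congr rfl fun k _ => Finset.sum_congr rfl fun l _ => ?_
  rw [pd_pbV hF hG k x]
  simp only [Finset.mul_sum, Finset.sum_mul]
  refine Finset.sum_congr rfl fun i _ => Finset.sum_congr rfl fun j _ => ?_
  ring

theorem main_jacobi (F G H : (Fin n → ℝ) → ℝ)
    (hF : ContDiff ℝ (⊤ : ℕ∞) F) (hG : ContDiff ℝ (⊤ : ℕ∞) G) (hH : ContDiff ℝ (⊤ : ℕ∞) H) (x : Fin n → ℝ) :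
    (∑ k, ∑ l, volt4 n x k l
        * pd k (fun y => ∑ i, ∑ j, volt4 n y i j * pd i F y * pd j G y) x * pd l H x)
      + (∑ k, ∑ l, volt4 n x k l
        * pd k (fun y => ∑ i, ∑ j, volt4 n y i j * pd i G y * pd j H y) x * pd l F x)
      + (∑ k, ∑ l, volt4 n x k l
        * pd k (fun y => ∑ i, ∑ j, volt4 n y i j * pd i H y * pd j F y) x * pd l G x) = 0 := by
  rw [pb_pb_expand hF hG x, pb_pb_expand hG hH x, pb_pb_expand hH hF x]
  simp only [Finset.sum_add_distrib]
  -- first order part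
  have h1 : ((∑ k, ∑ l, ∑ i, ∑ j, volt4 n x k l * dV k i j x * pd i F x * pd j G x * pd l H x)
      + (∑ k, ∑ l, ∑ i, ∑ j, volt4 n x k l * dV k i j x * pd i G x * pd j H x * pd l F x)
      + ∑ k, ∑ l, ∑ i, ∑ j, volt4 n x k l * dV k i j x * pd i H x * pd j F x * pd l G x) = 0 :=
    fo_cancel (volt4 n x) (fun k i j => dV k i j x)
      (fun i => pd i F x) (fun j => pd j G x) (fun l => pd l H x) (fun i j l => schouten x i j l)
  -- Hessian parts
  have hp : ∀ a b : Fin n, volt4 n x b a = - volt4 n x a b := fun a b => V4_antisymm x a b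
  have h2 : ((∑ k, ∑ l, ∑ i, ∑ j,
        volt4 n x k l * volt4 n x i j * pd k (pd i F) x * pd j G x * pd l H x)
      + ∑ k, ∑ l, ∑ i, ∑ j,
        volt4 n x k l * volt4 n x i j * pd i H x * pd k (pd j F) x * pd l G x) = 0 :=
    hess_cancel (volt4 n x) (fun a b => pd a (pd b F) x)
      (fun j => pd j G x) (fun l => pd l H x) hp (fun a b => pd_pd_symm hF a b x)
  have h3 : ((∑ k, ∑ l, ∑ i, ∑ j,
        volt4 n x k l * volt4 n x i j * pd k (pd i G) x * pd j H x * pd l F x)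
      + ∑ k, ∑ l, ∑ i, ∑ j,
        volt4 n x k l * volt4 n x i j * pd i F x * pd k (pd j G) x * pd l H x) = 0 :=
    hess_cancel (volt4 n x) (fun a b => pd a (pd b G) x)
      (fun j => pd j H x) (fun l => pd l F x) hp (fun a b => pd_pd_symm hG a b x)
  have h4 : ((∑ k, ∑ l, ∑ i, ∑ j,
        volt4 n x k l * volt4 n x i j * pd k (pd i H) x * pd j F x * pd l G x)
      + ∑ k, ∑ l, ∑ i, ∑ j,
        volt4 n x k l * volt4 n x i j * pd i G x * pd k (pd j H) x * pd l F x) = 0 :=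
    hess_cancel (volt4 n x) (fun a b => pd a (pd b H) x)
      (fun j => pd j F x) (fun l => pd l G x) hp (fun a b => pd_pd_symm hH a b x)
  linarith [h1, h2, h3, h4]

end QV

/-- The quartic Volterra bracket on `ℝⁿ` defined by
`{aᵢ,a_{i+1}}⁴ = aᵢa_{i+1}(aᵢ + a_{i+1})`, `{aᵢ,a_{i+2}}⁴ = aᵢa_{i+1}a_{i+2}` and
`{aᵢ,aⱼ}⁴ = 0` for `|i−j| > 2`, extended by bilinearity, antisymmetry and the Leibniz
rule, satisfies the Jacobi identity. -/
theorem quartic_volterra_bracket_jacobi (n : ℕ) (F G H : (Fin n → ℝ) → ℝ)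
    (hF : ContDiff ℝ (⊤ : ℕ∞) F) (hG : ContDiff ℝ (⊤ : ℕ∞) G) (hH : ContDiff ℝ (⊤ : ℕ∞) H) :
    pb (volt4 n) (pb (volt4 n) F G) H
      + pb (volt4 n) (pb (volt4 n) G H) F
      + pb (volt4 n) (pb (volt4 n) H F) G = 0 := by
  funext x
  simp only [Pi.add_apply, Pi.zero_apply]
  exact QV.main_jacobi F G H hF hG hH x
end

section
/- The involution φ on ℝ^{2n} defined by φ(aᵢ) = −a_{2n+1−i} for i = 1,…,2n is an anti-Poisson map for the quadratic Volterra bracket on ℝ^{2n}: {F∘φ, G∘φ}² = −{F,G}²∘φ for all smooth F, G. -/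
/-- The quadratic Volterra bivector on `ℝⁿ`: `{aᵢ,aⱼ} = aᵢaⱼ(δ_{i,j+1} − δ_{i+1,j})`
(indices 0-based in Lean, 1-based in the literature). -/
noncomputable def volt2 (n : ℕ) (x : Fin n → ℝ) (i j : Fin n) : ℝ :=
  x i * x j * (kron ((i : ℕ) = (j : ℕ) + 1) - kron ((i : ℕ) + 1 = (j : ℕ)))

/-- The involution `φ(aᵢ) = −a_{2n+1−i}` on `ℝ^{2n}` (`Fin.rev` is the 0-based index
reversal). -/
noncomputable def phiV (n : ℕ) (x : Fin (2 * n) → ℝ) : Fin (2 * n) → ℝ :=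
  fun i => -(x i.rev)

noncomputable def phiL (n : ℕ) : (Fin (2*n) → ℝ) →L[ℝ] (Fin (2*n) → ℝ) :=
  -(ContinuousLinearMap.pi fun i => ContinuousLinearMap.proj i.rev)

lemma phiL_eq (n : ℕ) : ⇑(phiL n) = phiV n := by
  ext x i
  simp [phiL, phiV]

lemma phiL_single (n : ℕ) (i : Fin (2*n)) :
    phiL n (Pi.single i 1) = -(Pi.single i.rev (1:ℝ)) := by
  ext j
  simp only [phiL, ContinuousLinearMap.neg_apply, ContinuousLinearMap.pi_apply,
    ContinuousLinearMap.proj_apply, Pi.neg_apply]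
  congr 1
  by_cases h : j = i.rev
  · subst h; rw [Fin.rev_rev]; simp
  · rw [Pi.single_eq_of_ne h, Pi.single_eq_of_ne]
    intro hc; exact h (by rw [← hc, Fin.rev_rev])

lemma fderiv_comp_phiV (n : ℕ) (F : (Fin (2*n) → ℝ) → ℝ) (hF : ContDiff ℝ (⊤ : ℕ∞) F)
    (x : Fin (2*n) → ℝ) (i : Fin (2*n)) :
    fderiv ℝ (F ∘ phiV n) x (Pi.single i 1)
      = -(fderiv ℝ F (phiV n x) (Pi.single i.rev 1)) := by
  have h1 : F ∘ phiV n = F ∘ ⇑(phiL n) := by rw [phiL_eq]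
  have h2 : phiL n x = phiV n x := by rw [← phiL_eq]
  rw [h1, fderiv_comp x (by rw [h2]; exact (hF.differentiable (by simp)).differentiableAt)
    (phiL n).differentiableAt, (phiL n).fderiv]
  simp only [ContinuousLinearMap.coe_comp', Function.comp_apply, phiL_single, map_neg, h2]

lemma volt2_rev (n : ℕ) (x : Fin (2*n) → ℝ) (i j : Fin (2*n)) :
    volt2 (2*n) (phiV n x) i.rev j.rev = - volt2 (2*n) x i j := by
  have hi := i.isLt; have hj := j.isLt
  have h1 : (((i.rev : Fin (2*n)) : ℕ) = ((j.rev : Fin (2*n)) : ℕ) + 1) ↔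
      ((i : ℕ) + 1 = (j : ℕ)) := by
    rw [Fin.val_rev, Fin.val_rev]; omega
  have h2 : (((i.rev : Fin (2*n)) : ℕ) + 1 = ((j.rev : Fin (2*n)) : ℕ)) ↔
      ((i : ℕ) = (j : ℕ) + 1) := by
    rw [Fin.val_rev, Fin.val_rev]; omega
  simp only [volt2, phiV, Fin.rev_rev, kron, h1, h2]
  ring

/-- The involution `φ(aᵢ) = −a_{2n+1−i}` on `ℝ^{2n}` is an anti-Poisson map
for the quadratic Volterra bracket: `{F∘φ, G∘φ}² = −{F,G}²∘φ` for all smooth `F, G`. -/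
theorem phi_anti_poisson_quadratic_volterra (n : ℕ)
    (F G : (Fin (2 * n) → ℝ) → ℝ) (hF : ContDiff ℝ (⊤ : ℕ∞) F) (hG : ContDiff ℝ (⊤ : ℕ∞) G) :
    pb (volt2 (2 * n)) (F ∘ phiV n) (G ∘ phiV n)
      = -((pb (volt2 (2 * n)) F G) ∘ phiV n) := by
  funext x
  simp only [pb, Function.comp_apply, Pi.neg_apply, ← Finset.sum_neg_distrib]
  have key : ∀ i j : Fin (2*n),
      volt2 (2*n) x i j * fderiv ℝ (F ∘ phiV n) x (Pi.single i 1)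
          * fderiv ℝ (G ∘ phiV n) x (Pi.single j 1)
        = -(volt2 (2*n) (phiV n x) i.rev j.rev
            * fderiv ℝ F (phiV n x) (Pi.single i.rev 1)
            * fderiv ℝ G (phiV n x) (Pi.single j.rev 1)) := by
    intro i j
    rw [fderiv_comp_phiV n F hF, fderiv_comp_phiV n G hG, volt2_rev]
    ring
  calc (∑ i : Fin (2*n), ∑ j : Fin (2*n), volt2 (2*n) x i j * fderiv ℝ (F ∘ phiV n) x (Pi.single i 1)
          * fderiv ℝ (G ∘ phiV n) x (Pi.single j 1))
      = ∑ i : Fin (2*n), ∑ j : Fin (2*n), -(volt2 (2*n) (phiV n x) i.rev j.rev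
            * fderiv ℝ F (phiV n x) (Pi.single i.rev 1)
            * fderiv ℝ G (phiV n x) (Pi.single j.rev 1)) := by
        exact Finset.sum_congr rfl fun i _ => Finset.sum_congr rfl fun j _ => key i j
    _ = ∑ i, ∑ j, -(volt2 (2*n) (phiV n x) i j
            * fderiv ℝ F (phiV n x) (Pi.single i 1)
            * fderiv ℝ G (phiV n x) (Pi.single j 1)) := by
        refine Fintype.sum_equiv Fin.revPerm _ _ fun i => ?_
        exact Fintype.sum_equiv Fin.revPerm _ _ fun j => rfl
end
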